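/- Let G be a graph on t > 1000 vertices whose complement has ē edges with ē ≤ t²/4. Then the number of edges of G that are not contained in any triangle of G is at most (√2 + 0.01)·ē. -/

import Mathlib

open SimpleGraph

open Classical in
/-- `w(G)`: the product, over all edges `e` of `G`, of the weight of `e`, where an edge
weighs `2` if it lies in some triangle of `G` and `3` otherwise. -/
noncomputable def graphWeight {V : Type*} [Fintype V] (G : SimpleGraph V) : ℕ :=
  ∏ e ∈ G.edgeFinset, if ∃ x, ∀ y ∈ e, G.Adj x y then 2 else 3

/-- The number of edges of `G` lying in some triangle of `G`. -/
noncomputable def triEdgeCount {V : Type*} (G : SimpleGraph V) : ℕ :=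
  {e ∈ G.edgeSet | ∃ x, ∀ y ∈ e, G.Adj x y}.ncard

/-- The number of edges of `G` lying in no triangle of `G`. -/
noncomputable def nonTriEdgeCount {V : Type*} (G : SimpleGraph V) : ℕ :=
  {e ∈ G.edgeSet | ¬ ∃ x, ∀ y ∈ e, G.Adj x y}.ncard

/-!
Let `H` be the graph of the edges of `G` lying in no triangle, and `d̄` the degree in `Gᶜ`.
The `H`-neighbourhood of a vertex is a clique of `Gᶜ`, so every `H`-degree `d` satisfies
`d (d - 1) ≤ 2ē ≤ t² / 2`, i.e. `√2 d ≤ √2 + t`. If `uv` is an edge of `H`, every other vertex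
is a `Gᶜ`-neighbour of `u` or of `v`, so `t - 2 ≤ d̄ u + d̄ v`. Summing over the darts of `H`,
`|H| (t - 2) ≤ ∑ᵥ d_H(v) d̄(v) ≤ (1 + t / √2) · 2ē`, and `t > 1000` leaves room for the `0.01`.
-/

open Finset

theorem sqrt_two_mul_le_of_mul_sub_one_le {d t : ℝ} (ht : 0 ≤ t) (h : d * (d - 1) ≤ t ^ 2 / 2) :
    √2 * d ≤ √2 + t := by
  have hs : 0 ≤ √2 := Real.sqrt_nonneg 2
  rcases le_or_gt d 1 with hd | hd
  · nlinarith
  · have hsq : (√2 * (d - 1)) ^ 2 ≤ t ^ 2 := by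
      rw [mul_pow, Real.sq_sqrt zero_le_two]
      nlinarith
    nlinarith

theorem le_sqrt_two_add_mul_of_sqrt_two_mul_le {m e t : ℝ} (he : 0 ≤ e) (ht : 1000 < t)
    (h : √2 * m * (t - 2) ≤ 2 * (√2 + t) * e) : m ≤ (√2 + 0.01) * e := by
  have hs : (1.41 : ℝ) ≤ √2 := Real.le_sqrt_of_sq_le (by norm_num)
  have hs2 : √2 ^ 2 = 2 := Real.sq_sqrt zero_le_two
  have hpos : 0 < √2 * (t - 2) := mul_pos (by positivity) (by linarith)
  have hslack : 0 ≤ e * (0.01 * √2 * (t - 2) - 4 - 2 * √2) := mul_nonneg he (by nlinarith)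
  refine le_of_mul_le_mul_left ?_ hpos
  calc √2 * (t - 2) * m = √2 * m * (t - 2) := by ring
    _ ≤ 2 * (√2 + t) * e := h
    _ ≤ √2 * (t - 2) * ((√2 + 0.01) * e) := by linear_combination hslack - e * (t - 2) * hs2

namespace SimpleGraph

variable {V : Type*}

section Darts

variable [Fintype V] (G : SimpleGraph V) [DecidableRel G.Adj]

theorem sum_dart_fst {M : Type*} [AddCommMonoid M] (f : V → M) :
    ∑ d : G.Dart, f d.fst = ∑ v, G.degree v • f v := by
  classical
  rw [← sum_fiberwise univ (·.fst)]
  refine sum_congr rfl fun v _ => ?_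
  rw [sum_congr rfl fun d hd => congrArg f (mem_filter.1 hd).2, sum_const]
  congr 1
  convert G.dart_fst_fiber_card_eq_degree v

theorem sum_dart_snd {M : Type*} [AddCommMonoid M] (f : V → M) :
    ∑ d : G.Dart, f d.snd = ∑ d : G.Dart, f d.fst :=
  Fintype.sum_equiv (Dart.symm_involutive.toPerm _) _ _ fun _ => rfl

end Darts

theorem card_edgeFinset_mul_le_sum_degree_mul_degree [Fintype V] (H K : SimpleGraph V)
    [DecidableRel H.Adj] [DecidableRel K.Adj] {n : ℕ}
    (h : ∀ ⦃u v⦄, H.Adj u v → n ≤ K.degree u + K.degree v) :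
    #H.edgeFinset * n ≤ ∑ v, H.degree v * K.degree v := by
  have h2 : 2 * (#H.edgeFinset * n) ≤ 2 * ∑ v, H.degree v * K.degree v := calc
    _ = ∑ _d : H.Dart, n := by
      rw [sum_const, card_univ, dart_card_eq_twice_card_edges, smul_eq_mul, mul_assoc]
    _ ≤ ∑ d : H.Dart, (K.degree d.fst + K.degree d.snd) := sum_le_sum fun d _ => h d.adj
    _ = 2 * ∑ d : H.Dart, K.degree d.fst := by
      rw [sum_add_distrib, H.sum_dart_snd fun v => K.degree v, two_mul]
    _ = _ := by rw [H.sum_dart_fst fun v => K.degree v]; rfl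
  omega

theorem IsClique.card_mul_card_sub_one_le [Fintype V] {G : SimpleGraph V} [DecidableRel G.Adj]
    {s : Finset V} (h : G.IsClique s) : #s * (#s - 1) ≤ 2 * #G.edgeFinset := by
  rw [two_mul_card_edgeFinset, Nat.mul_sub_one, ← offDiag_card]
  refine card_le_card fun p hp => ?_
  obtain ⟨hu, hv, hne⟩ := mem_offDiag.1 hp
  exact mem_filter.2 ⟨mem_univ _, h hu hv hne⟩

variable (G : SimpleGraph V)

def nonTriangleGraph : SimpleGraph V where
  Adj u v := G.Adj u v ∧ ¬ ∃ x, G.Adj x u ∧ G.Adj x v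
  symm := ⟨fun _ _ ⟨h, hn⟩ => ⟨h.symm, fun ⟨x, hx⟩ => hn ⟨x, hx.2, hx.1⟩⟩⟩
  loopless := ⟨fun v h => G.loopless.irrefl v h.1⟩

theorem edgeSet_nonTriangleGraph :
    G.nonTriangleGraph.edgeSet = {e ∈ G.edgeSet | ¬ ∃ x, ∀ y ∈ e, G.Adj x y} := by
  ext ⟨u, v⟩
  simp [nonTriangleGraph, imp_iff_not_or]

theorem isClique_compl_neighborSet_nonTriangleGraph (a : V) :
    Gᶜ.IsClique (G.nonTriangleGraph.neighborSet a) := by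
  intro v hv w hw hne
  exact ⟨hne, fun hvw => hv.2 ⟨w, hw.1.symm, hvw.symm⟩⟩

variable [Fintype V] [DecidableEq V] [DecidableRel G.Adj]

theorem card_sub_two_le_degree_compl_add {u v : V} (h : G.nonTriangleGraph.Adj u v) :
    Fintype.card V - 2 ≤ Gᶜ.degree u + Gᶜ.degree v := by
  have hsub : univ \ {u, v} ⊆ Gᶜ.neighborFinset u ∪ Gᶜ.neighborFinset v := by
    intro w hw
    simp only [mem_sdiff, mem_insert, mem_singleton, not_or] at hw
    simp only [mem_union, mem_neighborFinset, compl_adj]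
    by_contra! hw'
    exact h.2 ⟨w, (hw'.1 (Ne.symm hw.2.1)).symm, (hw'.2 (Ne.symm hw.2.2)).symm⟩
  calc Fintype.card V - 2 = #(univ \ {u, v}) := by
        rw [card_sdiff_of_subset (subset_univ _), card_univ, card_pair h.1.ne]
    _ ≤ _ := (card_le_card hsub).trans (card_union_le _ _)
    _ = _ := by rw [card_neighborFinset_eq_degree, card_neighborFinset_eq_degree]

variable [DecidableRel G.nonTriangleGraph.Adj]

theorem degree_nonTriangleGraph_mul_le (a : V) :
    G.nonTriangleGraph.degree a * (G.nonTriangleGraph.degree a - 1) ≤ 2 * #Gᶜ.edgeFinset := by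
  have h := G.isClique_compl_neighborSet_nonTriangleGraph a
  rw [← coe_neighborFinset] at h
  simpa only [card_neighborFinset_eq_degree] using h.card_mul_card_sub_one_le

theorem sqrt_two_mul_degree_nonTriangleGraph_le
    (hbar : (#Gᶜ.edgeFinset : ℝ) ≤ (Fintype.card V : ℝ) ^ 2 / 4) (a : V) :
    √2 * G.nonTriangleGraph.degree a ≤ √2 + Fintype.card V := by
  refine sqrt_two_mul_le_of_mul_sub_one_le (Nat.cast_nonneg _) ?_
  have h := G.degree_nonTriangleGraph_mul_le a
  set d := G.nonTriangleGraph.degree a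
  rcases Nat.eq_zero_or_pos d with h0 | h0
  · rw [h0, Nat.cast_zero, zero_mul]
    positivity
  · have hcast : ((d - 1 : ℕ) : ℝ) = d - 1 := by rw [Nat.cast_sub h0, Nat.cast_one]
    have : (d : ℝ) * (d - 1) ≤ 2 * #Gᶜ.edgeFinset := by rw [← hcast]; exact_mod_cast h
    linarith

theorem sqrt_two_mul_card_edgeFinset_nonTriangleGraph_le
    (hbar : (#Gᶜ.edgeFinset : ℝ) ≤ (Fintype.card V : ℝ) ^ 2 / 4) :
    √2 * #G.nonTriangleGraph.edgeFinset * (Fintype.card V - 2 : ℕ) ≤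
      2 * (√2 + Fintype.card V) * #Gᶜ.edgeFinset := by
  have hcount := card_edgeFinset_mul_le_sum_degree_mul_degree G.nonTriangleGraph Gᶜ
    fun _ _ h => G.card_sub_two_le_degree_compl_add h
  calc √2 * #G.nonTriangleGraph.edgeFinset * (Fintype.card V - 2 : ℕ)
      ≤ √2 * ∑ v, (G.nonTriangleGraph.degree v * Gᶜ.degree v : ℝ) := by
        rw [mul_assoc]; gcongr; exact_mod_cast hcount
    _ = ∑ v, √2 * G.nonTriangleGraph.degree v * Gᶜ.degree v := by
        simp only [mul_sum, mul_assoc]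
    _ ≤ ∑ v, (√2 + Fintype.card V) * Gᶜ.degree v :=
        sum_le_sum fun v _ => by gcongr; exact G.sqrt_two_mul_degree_nonTriangleGraph_le hbar v
    _ = 2 * (√2 + Fintype.card V) * #Gᶜ.edgeFinset := by
        rw [← mul_sum, ← Nat.cast_sum, sum_degrees_eq_twice_card_edges]
        push_cast; ring

end SimpleGraph

theorem nonTriEdgeCount_eq_card_edgeFinset {V : Type*} (G : SimpleGraph V)
    [Fintype G.nonTriangleGraph.edgeSet] :
    nonTriEdgeCount G = #G.nonTriangleGraph.edgeFinset := by
  rw [nonTriEdgeCount, ← edgeSet_nonTriangleGraph, ← coe_edgeFinset, Set.ncard_coe_finset]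

/-- If `G` is a graph on `t > 1000` vertices whose complement has `ē ≤ t²/4` edges, then the
number of edges of `G` contained in no triangle of `G` is at most `(√2 + 0.01) · ē`. -/
theorem statement10 {V : Type*} [Fintype V] (G : SimpleGraph V)
    (ht : 1000 < Fintype.card V)
    (hbar : (Gᶜ.edgeSet.ncard : ℝ) ≤ (Fintype.card V : ℝ) ^ 2 / 4) :
    (nonTriEdgeCount G : ℝ) ≤ (Real.sqrt 2 + 0.01) * (Gᶜ.edgeSet.ncard : ℝ) := by
  classical
  rw [← coe_edgeFinset, Set.ncard_coe_finset] at hbar ⊢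
  have h := G.sqrt_two_mul_card_edgeFinset_nonTriangleGraph_le hbar
  rw [Nat.cast_sub (by omega), Nat.cast_ofNat] at h
  rw [nonTriEdgeCount_eq_card_edgeFinset]
  exact le_sqrt_two_add_mul_of_sqrt_two_mul_le (Nat.cast_nonneg _)
    (by exact_mod_cast ht : (1000 : ℝ) < Fintype.card V) h
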